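/- arXiv:1605.06460 — 3 statements merged into one kernel-verified Lean document; each statement's English description precedes it below -/
import Mathlib

section
/- Let E be a meet-semilattice with least element 0, let y ∈ E, and let F be an ultrafilter in E. Then the set J := {x ∧ y : x ∈ F} is an ultrafilter in the meet-semilattice ↓y := {z ∈ E : z ≤ y} if and only if y ∈ F. -/
/-!
Every filter `G` in a sub-poset generates a filter `upperClosure G` in all of `E`. If `y ∈ F`,
the cut-down set is `F ∩ ↓y`, and any filter `G` in `↓y` containing it generates a filter
containing `F`, hence equal to `F` by maximality, which forces `G ⊆ F ∩ ↓y`. Conversely, if the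
cut-down set is a filter in `↓y`, the filter it generates contains `F` and `y`, so maximality
again gives `y ∈ F`.
-/

/-- A filter in the sub-poset `P` of a meet-semilattice with least element `0 = ⊥`:
nonempty, upward-closed within `P`, closed under binary meets, not containing `⊥`. -/
def IsFilterWithin {E : Type*} [SemilatticeInf E] [OrderBot E] (P F : Set E) : Prop :=
  F ⊆ P ∧ F.Nonempty ∧ ⊥ ∉ F ∧
    (∀ x ∈ F, ∀ y ∈ P, x ≤ y → y ∈ F) ∧
    (∀ x ∈ F, ∀ y ∈ F, x ⊓ y ∈ F)

/-- An ultrafilter in `P` is a maximal filter in `P`. -/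
def IsUltrafilterWithin {E : Type*} [SemilatticeInf E] [OrderBot E] (P F : Set E) : Prop :=
  IsFilterWithin P F ∧ ∀ G : Set E, IsFilterWithin P G → F ⊆ G → G = F

open Set

section

variable {E : Type*} [SemilatticeInf E] [OrderBot E] {P F G : Set E} {x y : E}

theorem IsFilterWithin.inf_mem (hF : IsFilterWithin P F) (hx : x ∈ F) (hy : y ∈ F) :
    x ⊓ y ∈ F :=
  hF.2.2.2.2 x hx y hy

theorem IsFilterWithin.upperClosure (hG : IsFilterWithin P G) :
    IsFilterWithin univ (upperClosure G : Set E) := by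
  obtain ⟨-, ⟨g, hg⟩, hGbot, -, hGmeet⟩ := hG
  refine ⟨subset_univ _, ⟨g, subset_upperClosure hg⟩, ?_, ?_, ?_⟩
  · rintro ⟨g, hg, hle⟩
    exact hGbot (le_bot_iff.mp hle ▸ hg)
  · rintro w ⟨g, hg, hgw⟩ v - hwv
    exact ⟨g, hg, hgw.trans hwv⟩
  · rintro w ⟨g, hg, hgw⟩ v ⟨g', hg', hgv⟩
    exact ⟨g ⊓ g', hGmeet g hg g' hg', inf_le_inf hgw hgv⟩

theorem IsFilterWithin.inter_Iic (hF : IsFilterWithin univ F) (hy : y ∈ F) :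
    IsFilterWithin (Iic y) (F ∩ Iic y) := by
  obtain ⟨-, -, hFbot, hFup, hFmeet⟩ := hF
  refine ⟨inter_subset_right, ⟨y, hy, le_rfl⟩, fun h => hFbot h.1, ?_, ?_⟩
  · rintro x ⟨hx, -⟩ z hzy hxz
    exact ⟨hFup x hx z (mem_univ z) hxz, hzy⟩
  · rintro x ⟨hx, hxy⟩ z ⟨hz, -⟩
    exact ⟨hFmeet x hx z hz, inf_le_of_left_le hxy⟩

theorem IsFilterWithin.setOf_exists_eq_inf_eq_inter_Iic (hF : IsFilterWithin univ F)
    (hy : y ∈ F) :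
    {z | ∃ x ∈ F, z = x ⊓ y} = F ∩ Iic y := by
  ext z
  constructor
  · rintro ⟨x, hx, rfl⟩
    exact ⟨hF.inf_mem hx hy, inf_le_right⟩
  · rintro ⟨hz, hzy⟩
    exact ⟨z, hz, (inf_eq_left.mpr hzy).symm⟩

theorem IsUltrafilterWithin.upperClosure_eq (hF : IsUltrafilterWithin univ F)
    (hG : IsFilterWithin P G) (hFG : F ⊆ upperClosure G) : (upperClosure G : Set E) = F :=
  hF.2 _ hG.upperClosure hFG

theorem IsUltrafilterWithin.mem_of_subset_upperClosure (hF : IsUltrafilterWithin univ F)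
    (hG : IsFilterWithin (Iic y) G) (hFG : F ⊆ upperClosure G) : y ∈ F := by
  obtain ⟨g, hg⟩ := hG.2.1
  rw [← hF.upperClosure_eq hG hFG]
  exact ⟨g, hg, hG.1 hg⟩

theorem IsUltrafilterWithin.inter_Iic (hF : IsUltrafilterWithin univ F) (hy : y ∈ F) :
    IsUltrafilterWithin (Iic y) (F ∩ Iic y) := by
  refine ⟨hF.1.inter_Iic hy, fun G hG hFG => ?_⟩
  have hFG' : F ⊆ upperClosure G := fun z hz =>
    ⟨z ⊓ y, hFG ⟨hF.1.inf_mem hz hy, inf_le_right⟩, inf_le_left⟩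
  have hGF : G ⊆ F := fun g hg => hF.upperClosure_eq hG hFG' ▸ subset_upperClosure hg
  exact (subset_inter hGF hG.1).antisymm hFG

end

/-- Lemma: for an ultrafilter `F` in `E` and `y ∈ E`, the set `J = {x ⊓ y : x ∈ F}`
is an ultrafilter in `↓y = {z : z ≤ y}` if and only if `y ∈ F`. -/
theorem cutdown_ultrafilter_iff {E : Type*} [SemilatticeInf E] [OrderBot E]
    (y : E) (F : Set E) (hF : IsUltrafilterWithin Set.univ F) :
    IsUltrafilterWithin (Set.Iic y) {z | ∃ x ∈ F, z = x ⊓ y} ↔ y ∈ F := by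
  refine ⟨fun hJ => hF.mem_of_subset_upperClosure hJ.1 fun x hx => ?_, fun hy => ?_⟩
  · exact ⟨x ⊓ y, ⟨x, hx, rfl⟩, inf_le_left⟩
  · rw [hF.1.setOf_exists_eq_inf_eq_inter_Iic hy]
    exact hF.inter_Iic hy
end

section
/- Let (E,ℒ,ℬ) be a labelled space, let α be a nonempty finite labelled path and β ∈ ℒ*(E) be such that αβ is a labelled path, and let F ∈ X_β. Then J := {C ∩ r(αβ) : C ∈ F} is an ultrafilter in ℬ_{αβ} if and only if r(αβ) ∈ F. -/
open Set

/-- A filter in the sub-poset `P` of a powerset, ordered by inclusion, with least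
element `∅`: nonempty, upward-closed within `P`, downward-directed, not containing `∅`. -/
def IsFilterIn {V : Type*} (P F : Set (Set V)) : Prop :=
  F ⊆ P ∧ F.Nonempty ∧ ∅ ∉ F ∧
    (∀ X ∈ F, ∀ Y ∈ P, X ⊆ Y → Y ∈ F) ∧
    (∀ X ∈ F, ∀ Y ∈ F, ∃ Z ∈ F, Z ⊆ X ∧ Z ⊆ Y)

/-- An ultrafilter in `P` is a maximal filter in `P`. -/
def IsUltrafilterIn {V : Type*} (P F : Set (Set V)) : Prop :=
  IsFilterIn P F ∧ ∀ G : Set (Set V), IsFilterIn P G → F ⊆ G → G = F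

/-- A labelled graph: a directed graph with source, range and a surjective labelling map. -/
structure LGraph (V Edg A : Type*) where
  src : Edg → V
  rng : Edg → V
  lbl : Edg → A
  lbl_surj : Function.Surjective lbl

namespace LGraph

variable {V Edg A : Type*} (G : LGraph V Edg A)

/-- A finite path: a list of composable edges. -/
def IsPath (p : List Edg) : Prop := p.Chain' fun e f => G.rng e = G.src f

/-- The relative range `r(S, α)`, with the convention `r(S, ω) = S`. -/
def relR (S : Set V) : List A → Set V
  | [] => S
  | a :: w =>
      {v | ∃ p : List Edg, G.IsPath p ∧ p.map G.lbl = a :: w ∧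
        ∃ h : p ≠ [], G.src (p.head h) ∈ S ∧ G.rng (p.getLast h) = v}

/-- `α ∈ ℒ*(E)` : a finite labelled path (including the empty word). -/
def IsLbl (α : List A) : Prop := ∃ p : List Edg, G.IsPath p ∧ p.map G.lbl = α

/-- An infinite labelled path. -/
def IsLblInf (α : ℕ → A) : Prop :=
  ∃ p : ℕ → Edg, (∀ n, G.rng (p n) = G.src (p (n + 1))) ∧ ∀ n, G.lbl (p n) = α n

end LGraph

/-- A labelled space: a labelled graph together with an accommodating family `ℬ`. -/
structure LabelledSpace (V Edg A : Type*) extends LGraph V Edg A where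
  ℬ : Set (Set V)
  inter_mem : ∀ ⦃X Y : Set V⦄, X ∈ ℬ → Y ∈ ℬ → X ∩ Y ∈ ℬ
  union_mem : ∀ ⦃X Y : Set V⦄, X ∈ ℬ → Y ∈ ℬ → X ∪ Y ∈ ℬ
  range_mem : ∀ α : List A, α ≠ [] → toLGraph.IsLbl α → toLGraph.relR Set.univ α ∈ ℬ
  relR_mem : ∀ ⦃X : Set V⦄, X ∈ ℬ → ∀ α : List A, toLGraph.IsLbl α → toLGraph.relR X α ∈ ℬ

/-- Words of length `≤ ∞`: finite words are lists, infinite words are sequences. -/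
abbrev LWord (A : Type*) := List A ⊕ (ℕ → A)

/-- The length of a word in `ℕ∞`. -/
def wlen {A : Type*} : LWord A → ℕ∞
  | .inl l => (l.length : ℕ∞)
  | .inr _ => (⊤ : ℕ∞)

/-- `α_{1,n}` : the initial subword of length `n`. -/
def wtake {A : Type*} : LWord A → ℕ → List A
  | .inl l, n => l.take n
  | .inr f, n => (List.range n).map f

/-- Concatenation of a finite word with a word. -/
def wappend {A : Type*} (α : List A) : LWord A → LWord A
  | .inl l => .inl (α ++ l)
  | .inr f => .inr fun n => if h : n < α.length then α.get ⟨n, h⟩ else f (n - α.length)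

namespace LabelledSpace

variable {V Edg A : Type*} (L : LabelledSpace V Edg A)

abbrev relR : Set V → List A → Set V := L.toLGraph.relR

abbrev IsLbl : List A → Prop := L.toLGraph.IsLbl

/-- `r(α)` : the range of a word. -/
def wr (α : List A) : Set V := L.relR Set.univ α

/-- Membership in `ℒ^{≤∞}(E)`. -/
def IsLWord : LWord A → Prop
  | .inl l => L.IsLbl l
  | .inr f => L.toLGraph.IsLblInf f

/-- Weakly left-resolving. -/
def WeaklyLeftResolving : Prop :=
  ∀ ⦃X Y : Set V⦄, X ∈ L.ℬ → Y ∈ L.ℬ → ∀ α : List A, α ≠ [] →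
    L.relR (X ∩ Y) α = L.relR X α ∩ L.relR Y α

/-- `ℬ` is closed under relative complements. -/
def ClosedUnderRelComplements : Prop :=
  ∀ ⦃X Y : Set V⦄, X ∈ L.ℬ → Y ∈ L.ℬ → X \ Y ∈ L.ℬ

/-- `ℬ_α = {A ∈ ℬ : A ⊆ r(α)}`. -/
def Bw (α : List A) : Set (Set V) := {X | X ∈ L.ℬ ∧ X ⊆ L.wr α}

/-- `X_α` : the set of ultrafilters in `ℬ_α`. -/
def Xw (α : List A) : Set (Set (Set V)) := {F | IsUltrafilterIn (L.Bw α) F}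

/-- `X_{(α)β} = {F ∈ X_β : r(αβ) ∈ F}`, with the convention `X_{(ω)β} = X_β`. -/
def XP (α β : List A) : Set (Set (Set V)) :=
  match α with
  | [] => L.Xw β
  | a :: l => {F | F ∈ L.Xw β ∧ L.wr ((a :: l) ++ β) ∈ F}

/-- `g_{(α)β}(F) = {C ∩ r(αβ) : C ∈ F}`. -/
def gmap (α β : List A) (F : Set (Set V)) : Set (Set V) :=
  {D | ∃ C ∈ F, D = C ∩ L.wr (α ++ β)}

/-- `h_{[α]β}(F)` : the upward closure of `F` in `ℬ_β` (only depends on `β`). -/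
def hmap (β : List A) (F : Set (Set V)) : Set (Set V) :=
  {D | D ∈ L.Bw β ∧ ∃ C ∈ F, C ⊆ D}

/-- `f_{β[γ]}(F) = {A ∈ ℬ_β : r(A,γ) ∈ F}`. -/
def fmap (β γ : List A) (F : Set (Set V)) : Set (Set V) :=
  {X | X ∈ L.Bw β ∧ L.relR X γ ∈ F}

/-- `X_α^{sink}`. -/
def Xsink (α : List A) : Set (Set (Set V)) :=
  {F | F ∈ L.Xw α ∧ ∀ b : A, ∃ X ∈ F, L.relR X [b] = ∅}

/-- A complete family (of filters) for the word `w`. -/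
def IsCompleteFamily (w : LWord A) (F : ℕ → Set (Set V)) : Prop :=
  (∀ n : ℕ, 0 < n → (n : ℕ∞) ≤ wlen w → IsFilterIn (L.Bw (wtake w n)) (F n)) ∧
  (IsFilterIn (L.Bw []) (F 0) ∨ F 0 = ∅) ∧
  ∀ n : ℕ, (n : ℕ∞) < wlen w →
    F n = {X | X ∈ L.Bw (wtake w n) ∧ L.relR X ((wtake w (n + 1)).drop n) ∈ F (n + 1)}

/-- A complete family of ultrafilters for the word `w`. -/
def IsCompleteUltraFamily (w : LWord A) (F : ℕ → Set (Set V)) : Prop :=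
  (∀ n : ℕ, 0 < n → (n : ℕ∞) ≤ wlen w → IsUltrafilterIn (L.Bw (wtake w n)) (F n)) ∧
  (IsUltrafilterIn (L.Bw []) (F 0) ∨ F 0 = ∅) ∧
  ∀ n : ℕ, (n : ℕ∞) < wlen w →
    F n = {X | X ∈ L.Bw (wtake w n) ∧ L.relR X ((wtake w (n + 1)).drop n) ∈ F (n + 1)}

/-- Membership in `E(S)`: `none` is the zero element, `some (α, X)` stands for `(α, X, α)`. -/
def ESmem : Option (List A × Set V) → Prop
  | none => True
  | some p => p.2 ∈ L.Bw p.1 ∧ p.2 ≠ ∅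

/-- `E(S) ∖ {0}`. -/
def ESnz : Set (Option (List A × Set V)) := {p | L.ESmem p ∧ p ≠ none}

/-- The natural order on `E(S)`: `(α,A,α) ≤ (β,B,β)` iff `α = βα'` and `A ⊆ r(B,α')`. -/
def ESle : Option (List A × Set V) → Option (List A × Set V) → Prop
  | none, _ => True
  | some _, none => False
  | some p, some q => ∃ γ : List A, p.1 = q.1 ++ γ ∧ p.2 ⊆ L.relR q.2 γ

open Classical in
/-- The product in the semilattice `E(S)`. -/
noncomputable def ESmul :
    Option (List A × Set V) → Option (List A × Set V) → Option (List A × Set V)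
  | none, _ => none
  | some _, none => none
  | some p, some q =>
    if p.1 <+: q.1 then
      if L.relR p.2 (q.1.drop p.1.length) ∩ q.2 = ∅ then none
      else some (q.1, L.relR p.2 (q.1.drop p.1.length) ∩ q.2)
    else if q.1 <+: p.1 then
      if p.2 ∩ L.relR q.2 (p.1.drop q.1.length) = ∅ then none
      else some (p.1, p.2 ∩ L.relR q.2 (p.1.drop q.1.length))
    else none

/-- A filter in `E(S)`. -/
def IsESFilter (ξ : Set (Option (List A × Set V))) : Prop :=
  ξ ⊆ L.ESnz ∧ ξ.Nonempty ∧
    (∀ p ∈ ξ, ∀ q, L.ESmem q → L.ESle p q → q ∈ ξ) ∧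
    (∀ p ∈ ξ, ∀ q ∈ ξ, ∃ z ∈ ξ, L.ESle z p ∧ L.ESle z q)

/-- `Z` is a cover for `x` in `E(S)`. -/
def ESCover (x : Option (List A × Set V)) (Z : Set (Option (List A × Set V))) : Prop :=
  (∀ z ∈ Z, L.ESmem z ∧ L.ESle z x) ∧
  ∀ y, L.ESmem y → y ≠ none → L.ESle y x → ∃ z ∈ Z, L.ESmul y z ≠ none

/-- A tight filter in `E(S)`: every finite cover of an element of the filter meets the filter. -/
def IsTightESFilter (ξ : Set (Option (List A × Set V))) : Prop :=
  L.IsESFilter ξ ∧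
    ∀ x ∈ ξ, ∀ Z : Set (Option (List A × Set V)), Z.Finite → L.ESCover x Z →
      (Z ∩ ξ).Nonempty

/-- The filter in `E(S)` associated with the pair `(w, F)` of a word together with a
(complete) family: `ξ = ⋃_n ⋃_{X ∈ F n} ↑(w_{1,n}, X)`. -/
def filterOf (w : LWord A) (F : ℕ → Set (Set V)) : Set (Option (List A × Set V)) :=
  {p | L.ESmem p ∧
    ∃ n : ℕ, (n : ℕ∞) ≤ wlen w ∧ ∃ X ∈ F n, L.ESle (some (wtake w n, X)) p}

/-- `ξ_n = {X : (w_{1,n}, X, w_{1,n}) ∈ ξ}`. -/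
def xiN (_L : LabelledSpace V Edg A) (w : LWord A) (ξ : Set (Option (List A × Set V)))
    (n : ℕ) : Set (Set V) :=
  {X | some (wtake w n, X) ∈ ξ}

/-- `T_w` : the tight filters in `E(S)` whose associated word is `w`. -/
def Tw (w : LWord A) : Set (Set (Option (List A × Set V))) :=
  {ξ | L.IsTightESFilter ξ ∧
    ∃ F : ℕ → Set (Set V), L.IsCompleteFamily w F ∧ ξ = L.filterOf w F}

/-- `T_{(α)w} = {ξ ∈ T_w : ξ₀ is an ultrafilter in ℬ with r(α) ∈ ξ₀}`, with
`T_{(ω)w} = T_w`. -/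
def TwP (α : List A) (w : LWord A) : Set (Set (Option (List A × Set V))) :=
  match α with
  | [] => L.Tw w
  | a :: l =>
    {ξ | ξ ∈ L.Tw w ∧ IsUltrafilterIn (L.Bw []) (L.xiN w ξ 0) ∧ L.wr (a :: l) ∈ L.xiN w ξ 0}

/-- The family `{J_i}` for `αw` built from a family `{F_n}` for `w`:
`J_{|α|+n} = g_{(α)w_{1,n}}(F_n)` for `1 ≤ n ≤ |w|` and
`J_i = f_{α_{1,i}[α_{i+1,|α|}w₁]}(J_{|α|+1})` for `0 ≤ i ≤ |α|`
(reading `J_{|α|} = g_{(α)ω}(F₀)` and `J_i = f_{α_{1,i}[α_{i+1,|α|}]}(J_{|α|})` when `w = ω`). -/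
def Jfamily (α : List A) (w : LWord A) (F : ℕ → Set (Set V)) : ℕ → Set (Set V) :=
  match w with
  | .inl [] => fun i =>
      if i < α.length then L.fmap (α.take i) (α.drop i) (L.gmap α [] (F 0))
      else L.gmap α [] (F 0)
  | w => fun i =>
      if i ≤ α.length then
        L.fmap (α.take i) (α.drop i ++ wtake w 1) (L.gmap α (wtake w 1) (F 1))
      else L.gmap α (wtake w (i - α.length)) (F (i - α.length))

/-- `G_{(α)w}` as an operation on filters in `E(S)`. -/
def Gmap (α : List A) (w : LWord A) (ξ : Set (Option (List A × Set V))) :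
    Set (Option (List A × Set V)) :=
  L.filterOf (wappend α w) (L.Jfamily α w (L.xiN w ξ))

/-- The family `{η_n}` for `w` built from a family for `αw`:
`η_n = h_{[α]w_{1,n}}(F_{|α|+n})`. -/
def Hfam (α : List A) (w : LWord A) (F : ℕ → Set (Set V)) : ℕ → Set (Set V) :=
  fun n => L.hmap (wtake w n) (F (α.length + n))

/-- `H_{[α]w}` as an operation on filters in `E(S)`. -/
def Hmap (α : List A) (w : LWord A) (ξ : Set (Option (List A × Set V))) :
    Set (Option (List A × Set V)) :=
  L.filterOf w (L.Hfam α w (L.xiN (wappend α w) ξ))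

end LabelledSpace

/-- The topology of pointwise convergence on sets of subsets of `V`
(product topology with discrete coordinates, via indicator functions). -/
def memTopology (V : Type*) : TopologicalSpace (Set (Set V)) :=
  show TopologicalSpace (Set V → Prop) from
    @Pi.topologicalSpace (Set V) (fun _ => Prop) (fun _ => ⊥)

/-!
Since `r(αβ) ⊆ r(β)`, `ℬ_{αβ}` is the part of the `∩`-closed family `ℬ_β` lying below
`r := r(αβ)`, and `g_{(α)β}(F)` is the trace of `F` on `r`. If the trace is a filter, its
upward closure in `ℬ_β` is a filter containing `F`, hence equal to `F` by maximality, and it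
contains `r`. Conversely, if `r ∈ F` the trace is just `{C ∈ F : C ⊆ r}`, and any filter `G`
below `r` containing it has an upward closure in `ℬ_β` that again equals `F`, so `G` is
contained in the trace.
-/

section FilterIn

variable {V : Type*} {P Q F G : Set (Set V)} {r : Set V}

theorem IsFilterIn.upperClosure (hG : IsFilterIn Q G) (hQP : Q ⊆ P) :
    IsFilterIn P {D | D ∈ P ∧ ∃ Y ∈ G, Y ⊆ D} := by
  obtain ⟨hGQ, ⟨Y₀, hY₀⟩, hG_empty, -, hGdir⟩ := hG
  refine ⟨fun D hD => hD.1, ⟨Y₀, hQP (hGQ hY₀), Y₀, hY₀, subset_rfl⟩, ?_, ?_, ?_⟩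
  · rintro ⟨-, Y, hY, hY_empty⟩
    exact hG_empty (subset_empty_iff.mp hY_empty ▸ hY)
  · rintro X ⟨-, Y, hY, hYX⟩ D hD hXD
    exact ⟨hD, Y, hY, hYX.trans hXD⟩
  · rintro X ⟨hX, Y, hY, hYX⟩ X' ⟨hX', Y', hY', hYX'⟩
    obtain ⟨Z, hZ, hZY, hZY'⟩ := hGdir Y hY Y' hY'
    exact ⟨Z, ⟨hQP (hGQ hZ), Z, hZ, subset_rfl⟩, hZY.trans hYX, hZY'.trans hYX'⟩

theorem IsFilterIn.inter_mem (hF : IsFilterIn P F)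
    (hP : ∀ X ∈ P, ∀ Y ∈ P, X ∩ Y ∈ P) {X Y : Set V} (hX : X ∈ F) (hY : Y ∈ F) :
    X ∩ Y ∈ F := by
  obtain ⟨hFP, -, -, hFup, hFdir⟩ := hF
  obtain ⟨Z, hZ, hZX, hZY⟩ := hFdir X hX Y hY
  exact hFup Z hZ _ (hP X (hFP hX) Y (hFP hY)) (subset_inter hZX hZY)

theorem IsFilterIn.trace_eq (hF : IsFilterIn P F)
    (hP : ∀ X ∈ P, ∀ Y ∈ P, X ∩ Y ∈ P) (hr : r ∈ F) :
    {D | ∃ C ∈ F, D = C ∩ r} = {C ∈ F | C ⊆ r} := by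
  ext D
  constructor
  · rintro ⟨C, hC, rfl⟩
    exact ⟨hF.inter_mem hP hC hr, inter_subset_right⟩
  · rintro ⟨hD, hDr⟩
    exact ⟨D, hD, (inter_eq_left.mpr hDr).symm⟩

theorem IsUltrafilterIn.mem_of_isFilterIn_trace (hF : IsUltrafilterIn P F) (hQP : Q ⊆ P)
    (hr : r ∈ P) (htrace : IsFilterIn Q {D | ∃ C ∈ F, D = C ∩ r}) : r ∈ F := by
  have hF_sub : F ⊆ {D | D ∈ P ∧ ∃ Y ∈ {D | ∃ C ∈ F, D = C ∩ r}, Y ⊆ D} :=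
    fun C hC => ⟨hF.1.1 hC, C ∩ r, ⟨C, hC, rfl⟩, inter_subset_left⟩
  rw [← hF.2 _ (htrace.upperClosure hQP) hF_sub]
  obtain ⟨C, hC⟩ := hF.1.2.1
  exact ⟨hr, C ∩ r, ⟨C, hC, rfl⟩, inter_subset_right⟩

theorem IsUltrafilterIn.restrict (hF : IsUltrafilterIn P F)
    (hP : ∀ X ∈ P, ∀ Y ∈ P, X ∩ Y ∈ P) (hr : r ∈ F) :
    IsUltrafilterIn {X ∈ P | X ⊆ r} {C ∈ F | C ⊆ r} := by
  have hFfilt := hF.1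
  obtain ⟨⟨hFP, -, hF_empty, hFup, hFdir⟩, hFmax⟩ := hF
  refine ⟨⟨fun C hC => ⟨hFP hC.1, hC.2⟩, ⟨r, hr, subset_rfl⟩, fun h => hF_empty h.1, ?_, ?_⟩, ?_⟩
  · rintro X ⟨hX, -⟩ Y ⟨hY, hYr⟩ hXY
    exact ⟨hFup X hX Y hY hXY, hYr⟩
  · rintro X ⟨hX, hXr⟩ Y ⟨hY, -⟩
    obtain ⟨Z, hZ, hZX, hZY⟩ := hFdir X hX Y hY
    exact ⟨Z, ⟨hZ, hZX.trans hXr⟩, hZX, hZY⟩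
  · intro G hG hFG
    have hF_sub : F ⊆ {D | D ∈ P ∧ ∃ Y ∈ G, Y ⊆ D} := fun C hC =>
      ⟨hFP hC, C ∩ r, hFG ⟨hFfilt.inter_mem hP hC hr, inter_subset_right⟩, inter_subset_left⟩
    have hclosure := hFmax _ (hG.upperClosure fun X hX => hX.1) hF_sub
    refine subset_antisymm (fun Y hY => ⟨?_, (hG.1 hY).2⟩) hFG
    exact hclosure ▸ ⟨(hG.1 hY).1, Y, hY, subset_rfl⟩

theorem IsUltrafilterIn.isUltrafilterIn_trace_iff (hF : IsUltrafilterIn P F)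
    (hP : ∀ X ∈ P, ∀ Y ∈ P, X ∩ Y ∈ P) (hr : r ∈ P) :
    IsUltrafilterIn {X ∈ P | X ⊆ r} {D | ∃ C ∈ F, D = C ∩ r} ↔ r ∈ F := by
  refine ⟨fun h => hF.mem_of_isFilterIn_trace (fun X hX => hX.1) hr h.1, fun hrF => ?_⟩
  rw [hF.1.trace_eq hP hrF]
  exact hF.restrict hP hrF

end FilterIn

namespace LabelledSpace

variable {V Edg A : Type*} (L : LabelledSpace V Edg A)

theorem wr_append_subset {α : List A} (β : List A) (hα : α ≠ []) :
    L.wr (α ++ β) ⊆ L.wr β := by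
  obtain ⟨a, l, rfl⟩ := List.exists_cons_of_ne_nil hα
  cases β with
  | nil => exact subset_univ _
  | cons b w =>
    rintro v ⟨p, hp, hpl, hp_ne, -, rfl⟩
    have hq : (p.drop (a :: l).length).map L.lbl = b :: w := by
      rw [List.map_drop, show p.map L.lbl = (a :: l) ++ b :: w from hpl]
      exact List.drop_left
    have hq_ne : p.drop (a :: l).length ≠ [] := by
      intro h
      rw [h] at hq
      exact List.cons_ne_nil _ _ hq.symm
    exact ⟨_, hp.drop _, hq, hq_ne, trivial, congrArg L.rng (List.getLast_drop hq_ne)⟩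

theorem Bw_inter_mem (β : List A) : ∀ X ∈ L.Bw β, ∀ Y ∈ L.Bw β, X ∩ Y ∈ L.Bw β :=
  fun _ hX _ hY => ⟨L.inter_mem hX.1 hY.1, inter_subset_left.trans hX.2⟩

theorem wr_append_mem_Bw {α : List A} (β : List A) (hα : α ≠ []) (hαβ : L.IsLbl (α ++ β)) :
    L.wr (α ++ β) ∈ L.Bw β :=
  ⟨L.range_mem _ (by simp [hα]) hαβ, L.wr_append_subset β hα⟩

theorem Bw_append {α : List A} (β : List A) (hα : α ≠ []) :
    L.Bw (α ++ β) = {X ∈ L.Bw β | X ⊆ L.wr (α ++ β)} := by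
  ext X
  exact ⟨fun ⟨hX, hXr⟩ => ⟨⟨hX, hXr.trans (L.wr_append_subset β hα)⟩, hXr⟩,
    fun ⟨⟨hX, _⟩, hXr⟩ => ⟨hX, hXr⟩⟩

end LabelledSpace

section
variable {V Edg A : Type*} (L : LabelledSpace V Edg A)

theorem gmap_mem_Xw_iff (α β : List A) (hα : α ≠ []) (hαβ : L.IsLbl (α ++ β))
    (F : Set (Set V)) (hF : F ∈ L.Xw β) :
    L.gmap α β F ∈ L.Xw (α ++ β) ↔ L.wr (α ++ β) ∈ F := by
  show IsUltrafilterIn (L.Bw (α ++ β)) {D | ∃ C ∈ F, D = C ∩ L.wr (α ++ β)} ↔ _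
  rw [L.Bw_append β hα]
  exact hF.isUltrafilterIn_trace_iff (L.Bw_inter_mem β) (L.wr_append_mem_Bw β hα hαβ)

end
end

section
/- Let (E,ℒ,ℬ) be a labelled space, let α be a nonempty finite labelled path and β ∈ ℒ*(E) be such that αβ is a labelled path. Then the map g_{(α)β} : X_{(α)β} → X_{αβ} is continuous. -/
open Set

/-!
On `X_{(α)β}` the map `g_{(α)β}` is `F ↦ {D ∈ F : D ⊆ r(αβ)}`: for `C ∈ F` the set `C ∩ r(αβ)` lies
in `F` (as `r(αβ) ∈ F` when `α ≠ ω`, and since `C ⊆ r(β)` when `α = ω`). For the topology of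
pointwise convergence, the `D`-coordinate of that map is the `D`-coordinate of `F` if
`D ⊆ r(αβ)` and constantly false otherwise, so it is continuous.
-/

theorem image_inter_eq_sep_subset {V : Type*} {F : Set (Set V)} {R : Set V}
    (h : ∀ C ∈ F, C ∩ R ∈ F) :
    {D | ∃ C ∈ F, D = C ∩ R} = {D | D ⊆ R ∧ D ∈ F} := by
  ext D
  constructor
  · rintro ⟨C, hC, rfl⟩
    exact ⟨inter_subset_right, h C hC⟩
  · rintro ⟨hDR, hDF⟩
    exact ⟨D, hDF, (inter_eq_left.mpr hDR).symm⟩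

theorem continuous_sep_subset {V : Type*} (R : Set V) :
    @Continuous _ _ (memTopology V) (memTopology V)
      (fun F : Set (Set V) => {D | D ⊆ R ∧ D ∈ F}) := by
  let : TopologicalSpace (Set (Set V)) := memTopology V
  let : TopologicalSpace Prop := ⊥
  refine continuous_pi (A := fun _ : Set V => Prop) fun D => ?_
  change Continuous fun F : Set (Set V) => D ⊆ R ∧ D ∈ F
  by_cases hD : D ⊆ R
  · simp only [hD, true_and]
    exact continuous_apply (A := fun _ : Set V => Prop) D
  · simpa only [hD, false_and] using continuous_const

namespace LabelledSpace

variable {V Edg A : Type*} (L : LabelledSpace V Edg A)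

theorem inter_mem_of_mem_XP {α β : List A} {F : Set (Set V)} (hF : F ∈ L.XP α β)
    {C : Set V} (hC : C ∈ F) : C ∩ L.wr (α ++ β) ∈ F := by
  cases α with
  | nil =>
    rwa [List.nil_append, inter_eq_left.mpr (hF.1.1 hC).2]
  | cons a l =>
    obtain ⟨⟨⟨hsub, -, -, hup, hdir⟩, -⟩, hR⟩ := hF
    obtain ⟨Z, hZ, hZC, hZR⟩ := hdir C hC _ hR
    exact hup Z hZ _ ⟨L.inter_mem (hsub hC).1 (hsub hR).1, inter_subset_right.trans (hsub hR).2⟩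
      (subset_inter hZC hZR)

end LabelledSpace

section
variable {V Edg A : Type*} (L : LabelledSpace V Edg A)

theorem gmap_continuous (α β : List A) :
    @ContinuousOn (Set (Set V)) (Set (Set V)) (memTopology V) (memTopology V)
      (L.gmap α β) (L.XP α β) := by
  let : TopologicalSpace (Set (Set V)) := memTopology V
  exact (continuous_sep_subset _).continuousOn.congr fun _ hF =>
    image_inter_eq_sep_subset fun _ => L.inter_mem_of_mem_XP hF

end
end
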